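/- If x ∈ Γ_k^n and x_j < 0 for some index j, then x|j ∈ Γ_k^n; that is, setting a negative coordinate of a point in the Gårding cone Γ_k^n to zero keeps it in Γ_k^n. -/

import Mathlib

open Finset

/-- The `k`-th elementary symmetric polynomial of `x ∈ ℝⁿ`. -/
noncomputable def esymm (n k : ℕ) (x : Fin n → ℝ) : ℝ :=
  ∑ A ∈ Finset.powersetCard k (Finset.univ : Finset (Fin n)), ∏ i ∈ A, x i

/-- The Gårding cone `Γₖⁿ = {x : sₗ(x) > 0, l = 1,…,k}`. -/
def GammaK (n k : ℕ) (x : Fin n → ℝ) : Prop :=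
  ∀ l, 1 ≤ l → l ≤ k → 0 < esymm n l x

/-!
Write `x = x_j :: s` as a multiset of coordinates. Then `s_{l+1}(x) = s_{l+1}(s) + x_j s_l(s)`,
and setting `x_j` to zero turns `s_{l+1}(x)` into `s_{l+1}(s)`. If `x_j < 0`, induction on `l`
shows `s_l(s) > 0` for `l ≤ k`: given `s_l(s) > 0`, we get
`s_{l+1}(s) = s_{l+1}(x) - x_j s_l(s) > s_{l+1}(x) > 0`.
-/

namespace Multiset

variable {R : Type*}

theorem esymm_cons_succ [CommSemiring R] (a : R) (s : Multiset R) (n : ℕ) :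
    (a ::ₘ s).esymm (n + 1) = s.esymm (n + 1) + a * s.esymm n := by
  simp only [esymm, powersetCard_cons, map_add, sum_add, map_map, Function.comp_def, prod_cons,
    sum_map_mul_left]

theorem esymm_zero_cons_succ [CommSemiring R] (s : Multiset R) (n : ℕ) :
    (0 ::ₘ s).esymm (n + 1) = s.esymm (n + 1) := by
  rw [esymm_cons_succ, zero_mul, add_zero]

theorem esymm_pos_of_cons_of_neg [CommRing R] [LinearOrder R] [IsStrictOrderedRing R]
    {a : R} {s : Multiset R} {k : ℕ} (ha : a < 0)
    (hpos : ∀ l, 1 ≤ l → l ≤ k → 0 < (a ::ₘ s).esymm l) :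
    ∀ m ≤ k, 0 < s.esymm m
  | 0, _ => by simp [esymm]
  | m + 1, hm => by
    have ih : 0 < s.esymm m := esymm_pos_of_cons_of_neg ha hpos m (by omega)
    have hcons : 0 < (a ::ₘ s).esymm (m + 1) := hpos (m + 1) (by omega) hm
    rw [esymm_cons_succ] at hcons
    linarith [mul_neg_of_neg_of_pos ha ih]

end Multiset

theorem esymm_eq_esymm_cons_erase {n : ℕ} (x : Fin n → ℝ) (j : Fin n) (l : ℕ) :
    esymm n l x = (x j ::ₘ (univ.erase j).val.map x).esymm l := by
  rw [esymm, ← Finset.esymm_map_val, erase_val, ← Multiset.map_cons,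
    Multiset.cons_erase (mem_univ j)]

theorem Finset.map_erase_update {α β : Type*} [DecidableEq α] (s : Finset α) (f : α → β)
    (j : α) (c : β) :
    (s.erase j).val.map (Function.update f j c) = (s.erase j).val.map f :=
  Multiset.map_congr rfl fun _ hi =>
    Function.update_of_ne (ne_of_mem_erase (Finset.mem_def.2 hi)) _ _

/-- Setting a negative coordinate of x ∈ Γₖⁿ to zero keeps it in Γₖⁿ. -/
theorem update_neg_mem_GammaK (n k : ℕ) (x : Fin n → ℝ) (hx : GammaK n k x)
    (j : Fin n) (hj : x j < 0) :
    GammaK n k (Function.update x j 0) := by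
  intro l hl hlk
  obtain ⟨m, rfl⟩ := Nat.exists_eq_add_of_le' hl
  rw [esymm_eq_esymm_cons_erase _ j, Function.update_self, map_erase_update,
    Multiset.esymm_zero_cons_succ]
  refine Multiset.esymm_pos_of_cons_of_neg hj (fun l hl hlk => ?_) (m + 1) hlk
  rw [← esymm_eq_esymm_cons_erase]
  exact hx l hl hlk
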